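/- Let H be a real Hilbert space, let m ≥ 1, and for each i ∈ {1,…,m} let α_i ∈ (0,1), let T_i : H → H be α_i-averaged, and let (e_{i,n})_{n∈ℕ} be a sequence in H. Set α = m·max{α_1,…,α_m}/(1+(m−1)·max{α_1,…,α_m}), let (λ_n)_{n∈ℕ} be a sequence in (0, 1/α), suppose Fix(T_1∘⋯∘T_m) ≠ ∅, suppose Σ_{n∈ℕ} λ_n(1−αλ_n) = +∞ and Σ_{n∈ℕ} λ_n‖e_{i,n}‖ < +∞ for every i, let z_0 ∈ H and define z_{n+1} = z_n + λ_n( T_1(T_2(⋯T_{m−1}(T_m z_n + e_{m,n}) + e_{m−1,n}⋯) + e_{2,n}) + e_{1,n} − z_n ). Then (T_1∘⋯∘T_m) z_n − z_n converges strongly to 0. -/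

import Mathlib

open Filter Topology
open scoped RealInnerProductSpace

variable {H : Type*} [NormedAddCommGroup H] [InnerProductSpace ℝ H] [CompleteSpace H]

/-- `T` is nonexpansive. -/
def IsNonexpansiveOp (T : H → H) : Prop :=
  ∀ x y, ‖T x - T y‖ ≤ ‖x - y‖

/-- `T` is `α`-averaged: `T = (1 - α) • Id + α • R` for some nonexpansive `R`. -/
def IsAveragedOp (α : ℝ) (T : H → H) : Prop :=
  ∃ R : H → H, IsNonexpansiveOp R ∧ ∀ x, T x = (1 - α) • x + α • R x

/-- `z n` converges weakly to `w`. -/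
def WeakLim (z : ℕ → H) (w : H) : Prop :=
  ∀ y : H, Tendsto (fun n => ⟪z n, y⟫) atTop (nhds ⟪w, y⟫)

/-- `compFrom T i k = T i ∘ T (i+1) ∘ ⋯ ∘ T (i+k-1)`; in particular
`compFrom T 1 m = T 1 ∘ ⋯ ∘ T m` and `compFrom T i 0 = id`. -/
def compFrom (T : ℕ → H → H) : ℕ → ℕ → H → H
  | _, 0 => id
  | i, (k + 1) => T i ∘ compFrom T (i + 1) k

/-- Inexact composition with errors: `inexactFrom T e 1 m z =
T 1 (T 2 (⋯ T (m-1) (T m z + e m) + e (m-1) ⋯) + e 2) + e 1`. -/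
def inexactFrom (T : ℕ → H → H) (e : ℕ → H) : ℕ → ℕ → H → H
  | _, 0 => id
  | i, (k + 1) => fun z => T i (inexactFrom T e (i + 1) k z) + e i

/-! Each `Tᵢ` satisfies `κ ‖T x - T y‖² + ‖(x - T x) - (y - T y)‖² ≤ κ ‖x - y‖²` with
`κ = M / (1 - M)`, and such constants add up under composition, so `T₁ ∘ ⋯ ∘ Tₘ` satisfies it
with `m κ`; this says exactly that it is `α`-averaged, `T₁ ∘ ⋯ ∘ Tₘ = (1 - α) Id + α R`.
The inexact iteration is then a Krasnosel'skiĭ–Mann iteration of the nonexpansive `R` with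
relaxation `μₙ = α λₙ` and summable errors. For a fixed point `x`, `‖zₙ - x‖²` drops by
`μₙ (1 - μₙ) ‖R zₙ - zₙ‖²` at each step up to summable errors, so these drops are summable;
the residual `‖R zₙ - zₙ‖` is nonincreasing up to summable errors, hence converges, and since
`∑ μₙ (1 - μₙ) = ∞` its limit is `0`. -/

section AveragedOperators

variable {E : Type*} [NormedAddCommGroup E]

/-- `α`-averagedness in the form
`‖T x - T y‖² + (1 - α) / α ‖(x - T x) - (y - T y)‖² ≤ ‖x - y‖²`, multiplied through by
`κ = α / (1 - α)`: in this parametrization the constants add up under composition. -/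
def AveragedIneq (κ : ℝ) (T : E → E) : Prop :=
  ∀ x y, κ * ‖T x - T y‖ ^ 2 + ‖(x - T x) - (y - T y)‖ ^ 2 ≤ κ * ‖x - y‖ ^ 2

namespace AveragedIneq

variable {κ κ₁ κ₂ : ℝ} {T T₁ T₂ : E → E}

theorem norm_sub_sq_le (hκ : 0 < κ) (hT : AveragedIneq κ T) (x y : E) :
    ‖T x - T y‖ ^ 2 ≤ ‖x - y‖ ^ 2 := by
  have := hT x y
  nlinarith [sq_nonneg ‖(x - T x) - (y - T y)‖]

theorem isNonexpansiveOp (hκ : 0 < κ) (hT : AveragedIneq κ T) : IsNonexpansiveOp T :=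
  fun x y => (sq_le_sq₀ (norm_nonneg _) (norm_nonneg _)).1 (hT.norm_sub_sq_le hκ x y)

theorem mono (hκ : 0 < κ₁) (hle : κ₁ ≤ κ₂) (hT : AveragedIneq κ₁ T) : AveragedIneq κ₂ T := by
  intro x y
  have := hT x y
  nlinarith [hT.norm_sub_sq_le hκ x y]

theorem comp (hκ₁ : 0 < κ₁) (hκ₂ : 0 < κ₂) (hT₁ : AveragedIneq κ₁ T₁) (hT₂ : AveragedIneq κ₂ T₂) :
    AveragedIneq (κ₁ + κ₂) (T₁ ∘ T₂) := by
  intro x y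
  set u := (x - T₂ x) - (y - T₂ y)
  set v := (T₂ x - T₁ (T₂ x)) - (T₂ y - T₁ (T₂ y))
  have h₁ := hT₁ (T₂ x) (T₂ y)
  have h₂ := hT₂ x y
  simp only [Function.comp_apply]
  rw [show (x - T₁ (T₂ x)) - (y - T₁ (T₂ y)) = u + v by simp only [u, v]; abel]
  -- Cauchy–Schwarz in the form `‖u + v‖² ≤ (κ₁ + κ₂) (‖u‖² / κ₂ + ‖v‖² / κ₁)`
  have hsum : κ₁ * κ₂ * ‖u + v‖ ^ 2 ≤ (κ₁ + κ₂) * (κ₁ * ‖u‖ ^ 2 + κ₂ * ‖v‖ ^ 2) := by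
    have htri : ‖u + v‖ ^ 2 ≤ (‖u‖ + ‖v‖) ^ 2 := by gcongr; exact norm_add_le u v
    nlinarith [sq_nonneg (κ₁ * ‖u‖ - κ₂ * ‖v‖), mul_pos hκ₁ hκ₂]
  rw [← mul_le_mul_iff_of_pos_left (mul_pos hκ₁ hκ₂)]
  nlinarith [mul_le_mul_of_nonneg_left h₁ (mul_pos hκ₂ (add_pos hκ₁ hκ₂)).le,
    mul_le_mul_of_nonneg_left h₂ (mul_pos hκ₁ (add_pos hκ₁ hκ₂)).le]

theorem compFrom {T : ℕ → E → E} (hκ : 0 < κ) {i k : ℕ} (hk : 1 ≤ k)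
    (hT : ∀ j, i ≤ j → j < i + k → AveragedIneq κ (T j)) :
    AveragedIneq (k * κ) (compFrom T i k) := by
  induction k, hk using Nat.le_induction generalizing i with
  | base => simpa [_root_.compFrom] using hT i le_rfl (by omega)
  | succ k hk ih =>
    have hrest := ih (i := i + 1) fun j hj₁ hj₂ => hT j (by omega) (by omega)
    have hk' : (0 : ℝ) < k := by exact_mod_cast hk
    have := (hT i le_rfl (by omega)).comp hκ (mul_pos hk' hκ) hrest
    rwa [Nat.cast_succ, add_one_mul, add_comm]

end AveragedIneq

variable [InnerProductSpace ℝ E]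

theorem norm_one_sub_smul_add_smul_sq (a : ℝ) (x y : E) :
    ‖(1 - a) • x + a • y‖ ^ 2 =
      (1 - a) * ‖x‖ ^ 2 + a * ‖y‖ ^ 2 - a * (1 - a) * ‖x - y‖ ^ 2 := by
  simp only [← real_inner_self_eq_norm_sq, inner_add_left, inner_add_right, inner_sub_left,
    inner_sub_right, real_inner_smul_left, real_inner_smul_right, real_inner_comm x y]
  ring

theorem IsAveragedOp.averagedIneq {α : ℝ} {T : E → E} (hα : α ∈ Set.Ioo (0 : ℝ) 1)
    (hT : IsAveragedOp α T) : AveragedIneq (α / (1 - α)) T := by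
  obtain ⟨R, hR, hTR⟩ := hT
  intro x y
  have hdiff : T x - T y = (1 - α) • (x - y) + α • (R x - R y) := by
    rw [hTR x, hTR y]; module
  have hres : (x - T x) - (y - T y) = α • ((x - y) - (R x - R y)) := by
    rw [hTR x, hTR y]; module
  have hRsq : ‖R x - R y‖ ^ 2 ≤ ‖x - y‖ ^ 2 := by gcongr; exact hR x y
  have h1α : 0 < 1 - α := sub_pos.2 hα.2
  rw [hdiff, hres, norm_smul, mul_pow, Real.norm_eq_abs, sq_abs,
    norm_one_sub_smul_add_smul_sq, ← mul_le_mul_iff_of_pos_left h1α]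
  field_simp
  nlinarith [mul_le_mul_of_nonneg_left hRsq (mul_nonneg hα.1.le hα.1.le)]

theorem AveragedIneq.isAveragedOp {κ : ℝ} {T : E → E} (hκ : 0 < κ) (hT : AveragedIneq κ T) :
    IsAveragedOp (κ / (1 + κ)) T := by
  refine ⟨fun x => x + ((1 + κ) / κ) • (T x - x), fun x y => ?_, fun x => ?_⟩
  · set a := x - y
    set c := (T x - x) - (T y - y)
    have hTxy := hT x y
    rw [show T x - T y = a + c by simp only [a, c]; abel,
      show (x - T x) - (y - T y) = -c by simp only [c]; abel, norm_neg] at hTxy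
    rw [show (x + ((1 + κ) / κ) • (T x - x)) - (y + ((1 + κ) / κ) • (T y - y)) =
        a + ((1 + κ) / κ) • c by simp only [a, c]; module]
    rw [← sq_le_sq₀ (norm_nonneg _) (norm_nonneg _), norm_add_sq_real, norm_smul,
      inner_smul_right, mul_pow, Real.norm_eq_abs, sq_abs]
    rw [norm_add_sq_real] at hTxy
    have hkey : 2 * κ * ⟪a, c⟫ + (1 + κ) * ‖c‖ ^ 2 ≤ 0 := by nlinarith
    have hgoal : ‖a‖ ^ 2 + 2 * ((1 + κ) / κ * ⟪a, c⟫) + ((1 + κ) / κ) ^ 2 * ‖c‖ ^ 2 =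
        ‖a‖ ^ 2 + (1 + κ) / κ ^ 2 * (2 * κ * ⟪a, c⟫ + (1 + κ) * ‖c‖ ^ 2) := by
      field_simp; ring
    rw [hgoal]
    linarith [mul_nonpos_of_nonneg_of_nonpos (by positivity : 0 ≤ (1 + κ) / κ ^ 2) hkey]
  · rw [smul_add, smul_smul, show κ / (1 + κ) * ((1 + κ) / κ) = 1 by field_simp]
    module

end AveragedOperators

theorem norm_inexactFrom_sub_compFrom_le {E : Type*} [NormedAddCommGroup E] (T : ℕ → E → E)
    (e : ℕ → E) {i k : ℕ} (hT : ∀ j, i ≤ j → j < i + k → IsNonexpansiveOp (T j)) (x : E) :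
    ‖inexactFrom T e i k x - compFrom T i k x‖ ≤ ∑ j ∈ Finset.Ico i (i + k), ‖e j‖ := by
  induction k generalizing i with
  | zero => simp [inexactFrom, compFrom]
  | succ k ih =>
    have hrest := ih (i := i + 1) (fun j hj₁ hj₂ => hT j (by omega) (by omega))
    rw [show i + (k + 1) = i + 1 + k by omega, Finset.sum_eq_sum_Ico_succ_bot (by omega)]
    calc ‖T i (inexactFrom T e (i + 1) k x) + e i - T i (compFrom T (i + 1) k x)‖
        ≤ ‖T i (inexactFrom T e (i + 1) k x) - T i (compFrom T (i + 1) k x)‖ + ‖e i‖ := by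
          rw [add_sub_right_comm]; exact norm_add_le _ _
      _ ≤ ‖e i‖ + ∑ j ∈ Finset.Ico (i + 1) (i + 1 + k), ‖e j‖ := by
          linarith [hT i le_rfl (by omega) (inexactFrom T e (i + 1) k x) (compFrom T (i + 1) k x)]

section RealSequences

variable {b c g t w : ℕ → ℝ}

theorem le_add_tsum_of_le_add (hb₀ : ∀ n, 0 ≤ b n) (hb : Summable b)
    (hc : ∀ n, c (n + 1) ≤ c n + b n) (n : ℕ) : c n ≤ c 0 + ∑' k, b k := by
  have hpartial : c n ≤ c 0 + ∑ k ∈ Finset.range n, b k := by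
    induction n with
    | zero => simp
    | succ n ih => rw [Finset.sum_range_succ]; linarith [hc n]
  linarith [hb.sum_le_tsum (Finset.range n) (fun k _ => hb₀ k)]

theorem summable_of_le_sub_add (hg : ∀ n, 0 ≤ g n) (hc : ∀ n, 0 ≤ c n) (hb₀ : ∀ n, 0 ≤ b n)
    (hb : Summable b) (h : ∀ n, g n ≤ c n - c (n + 1) + b n) : Summable g := by
  refine summable_of_sum_range_le hg (c := c 0 + ∑' k, b k) fun n => ?_
  have htele : ∑ k ∈ Finset.range n, (c k - c (k + 1)) = c 0 - c n := by
    rw [← neg_sub, ← Finset.sum_range_sub c n, ← Finset.sum_neg_distrib]; simp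
  calc ∑ k ∈ Finset.range n, g k ≤ ∑ k ∈ Finset.range n, (c k - c (k + 1) + b k) :=
        Finset.sum_le_sum fun k _ => h k
    _ ≤ c 0 + ∑' k, b k := by
        rw [Finset.sum_add_distrib, htele]
        linarith [hc n, hb.sum_le_tsum (Finset.range n) (fun k _ => hb₀ k)]

theorem exists_tendsto_of_le_add_summable (ht : ∀ n, 0 ≤ t n) (hb₀ : ∀ n, 0 ≤ b n)
    (hb : Summable b) (h : ∀ n, t (n + 1) ≤ t n + b n) : ∃ L, Tendsto t atTop (𝓝 L) := by
  set a : ℕ → ℝ := fun n => t n - ∑ k ∈ Finset.range n, b k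
  have ha_anti : Antitone a := antitone_nat_of_succ_le fun n => by
    simp only [a, Finset.sum_range_succ]; linarith [h n]
  have ha_bdd : BddBelow (Set.range a) := ⟨-∑' k, b k, by
    rintro _ ⟨n, rfl⟩
    linarith [ht n, hb.sum_le_tsum (Finset.range n) (fun k _ => hb₀ k)]⟩
  refine ⟨(⨅ n, a n) + ∑' k, b k, ?_⟩
  convert (tendsto_atTop_ciInf ha_anti ha_bdd).add hb.hasSum.tendsto_sum_nat using 1
  ext n; simp [a]

theorem eq_zero_of_tendsto_of_summable_mul_sq {L : ℝ} (ht : Tendsto t atTop (𝓝 L))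
    (hw₀ : ∀ n, 0 ≤ w n) (hw : ¬ Summable w) (hwt : Summable fun n => w n * t n ^ 2) :
    L = 0 := by
  by_contra hL
  have hL2 : 0 < L ^ 2 := by positivity
  have hev : ∀ᶠ n in atTop, L ^ 2 / 2 < t n ^ 2 :=
    (ht.pow 2).eventually (lt_mem_nhds (by linarith))
  refine hw (Summable.of_norm_bounded_eventually (hwt.mul_left (2 / L ^ 2)) ?_)
  rw [Nat.cofinite_eq_atTop]
  filter_upwards [hev] with n hn
  have hone : 1 ≤ 2 / L ^ 2 * t n ^ 2 := by
    rw [div_mul_eq_mul_div, le_div_iff₀ (by positivity)]; linarith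
  calc ‖w n‖ = w n * 1 := by rw [Real.norm_of_nonneg (hw₀ n), mul_one]
    _ ≤ w n * (2 / L ^ 2 * t n ^ 2) := mul_le_mul_of_nonneg_left hone (hw₀ n)
    _ = 2 / L ^ 2 * (w n * t n ^ 2) := by ring

end RealSequences

section KrasnoselskiiMann

variable {E : Type*} [NormedAddCommGroup E] [InnerProductSpace ℝ E]
  {R : E → E} {x : E} {μ : ℝ}

theorem IsNonexpansiveOp.norm_relaxed_sub_fixed_sq_le (hR : IsNonexpansiveOp R) (hx : R x = x)
    (hμ : μ ∈ Set.Icc (0 : ℝ) 1) (z : E) :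
    ‖z + μ • (R z - z) - x‖ ^ 2 ≤ ‖z - x‖ ^ 2 - μ * (1 - μ) * ‖R z - z‖ ^ 2 := by
  have hRz : ‖R z - x‖ ^ 2 ≤ ‖z - x‖ ^ 2 := by
    gcongr; simpa [hx] using hR z x
  rw [show z + μ • (R z - z) - x = (1 - μ) • (z - x) + μ • (R z - x) by module,
    norm_one_sub_smul_add_smul_sq, show z - x - (R z - x) = -(R z - z) by abel, norm_neg]
  nlinarith [mul_le_mul_of_nonneg_left hRz hμ.1]

theorem IsNonexpansiveOp.norm_relaxed_residual_le (hR : IsNonexpansiveOp R)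
    (hμ : μ ∈ Set.Icc (0 : ℝ) 1) (z ε : E) :
    ‖R (z + μ • (R z - z) + ε) - (z + μ • (R z - z) + ε)‖ ≤ ‖R z - z‖ + 2 * ‖ε‖ := by
  set z' := z + μ • (R z - z) + ε
  have hstep : ‖z' - z‖ ≤ μ * ‖R z - z‖ + ‖ε‖ := by
    calc ‖z' - z‖ = ‖μ • (R z - z) + ε‖ := by simp only [z']; abel_nf
      _ ≤ μ * ‖R z - z‖ + ‖ε‖ := by
        grw [norm_add_le, norm_smul, Real.norm_of_nonneg hμ.1]
  calc ‖R z' - z'‖ = ‖(R z' - R z) + ((1 - μ) • (R z - z) - ε)‖ := by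
        simp only [z']; congr 1; module
    _ ≤ ‖R z' - R z‖ + (‖(1 - μ) • (R z - z)‖ + ‖ε‖) := by
        grw [norm_add_le, norm_sub_le ((1 - μ) • (R z - z)) ε]
    _ ≤ ‖z' - z‖ + ((1 - μ) * ‖R z - z‖ + ‖ε‖) := by
        rw [norm_smul, Real.norm_of_nonneg (sub_nonneg.2 hμ.2)]; grw [hR z' z]
    _ ≤ ‖R z - z‖ + 2 * ‖ε‖ := by linarith

theorem IsNonexpansiveOp.norm_relaxed_add_sub_fixed_le (hR : IsNonexpansiveOp R) (hx : R x = x)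
    (hμ : μ ∈ Set.Icc (0 : ℝ) 1) (z ε : E) :
    ‖z + μ • (R z - z) + ε - x‖ ≤ ‖z - x‖ + ‖ε‖ ∧
      ‖z + μ • (R z - z) + ε - x‖ ^ 2 ≤ ‖z - x‖ ^ 2 - μ * (1 - μ) * ‖R z - z‖ ^ 2
        + (‖z - x‖ + ‖z + μ • (R z - z) + ε - x‖) * ‖ε‖ := by
  set w := z + μ • (R z - z)
  have hw := hR.norm_relaxed_sub_fixed_sq_le hx hμ z
  have hgap : 0 ≤ μ * (1 - μ) * ‖R z - z‖ ^ 2 :=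
    mul_nonneg (mul_nonneg hμ.1 (sub_nonneg.2 hμ.2)) (sq_nonneg _)
  have hwz : ‖w - x‖ ≤ ‖z - x‖ := by
    rw [← sq_le_sq₀ (norm_nonneg _) (norm_nonneg _)]; linarith
  have herr : ‖w + ε - x‖ ≤ ‖w - x‖ + ‖ε‖ := by
    rw [add_sub_right_comm]; exact norm_add_le _ _
  refine ⟨herr.trans (by linarith), ?_⟩
  nlinarith [norm_nonneg (w + ε - x), norm_nonneg (w - x), norm_nonneg ε]

theorem IsNonexpansiveOp.tendsto_apply_sub_self_of_relaxed (hR : IsNonexpansiveOp R) (hx : R x = x)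
    {μ : ℕ → ℝ} (hμ : ∀ n, μ n ∈ Set.Icc (0 : ℝ) 1)
    (hdiv : ¬ Summable fun n => μ n * (1 - μ n)) {ε : ℕ → E}
    (hε : Summable fun n => ‖ε n‖) {z : ℕ → E}
    (hz : ∀ n, z (n + 1) = z n + μ n • (R (z n) - z n) + ε n) :
    Tendsto (fun n => R (z n) - z n) atTop (𝓝 0) := by
  have hdist := fun n => hz n ▸ hR.norm_relaxed_add_sub_fixed_le hx (hμ n) (z n) (ε n)
  have hres := fun n => hz n ▸ hR.norm_relaxed_residual_le (hμ n) (z n) (ε n)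
  have hbound := le_add_tsum_of_le_add (c := fun n => ‖z n - x‖) (fun n => norm_nonneg _) hε
    fun n => (hdist n).1
  set B := ‖z 0 - x‖ + ∑' n, ‖ε n‖
  have hB : 0 ≤ B := (norm_nonneg _).trans (hbound 0)
  have hgap : Summable fun n => μ n * (1 - μ n) * ‖R (z n) - z n‖ ^ 2 := by
    refine summable_of_le_sub_add (c := fun n => ‖z n - x‖ ^ 2) (b := fun n => 2 * B * ‖ε n‖)
      (fun n => mul_nonneg (mul_nonneg (hμ n).1 (sub_nonneg.2 (hμ n).2)) (sq_nonneg _))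
      (fun n => sq_nonneg _) (fun n => by positivity) (hε.mul_left _)
      fun n => ?_
    nlinarith [(hdist n).2, hbound n, hbound (n + 1), norm_nonneg (ε n)]
  obtain ⟨L, hL⟩ := exists_tendsto_of_le_add_summable (t := fun n => ‖R (z n) - z n‖)
    (fun n => norm_nonneg _) (fun n => by positivity) (hε.mul_left 2) hres
  have hL0 := eq_zero_of_tendsto_of_summable_mul_sq hL
    (fun n => mul_nonneg (hμ n).1 (sub_nonneg.2 (hμ n).2)) hdiv hgap
  rw [tendsto_zero_iff_norm_tendsto_zero]
  exact hL0 ▸ hL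

theorem IsAveragedOp.tendsto_apply_sub_self_of_relaxed {α : ℝ} (hα : 0 < α) {T : E → E} (hT : IsAveragedOp α T)
    (hfix : ∃ x, T x = x) {lam : ℕ → ℝ} (hlam : ∀ n, lam n ∈ Set.Icc (0 : ℝ) (1 / α))
    (hdiv : ¬ Summable fun n => lam n * (1 - α * lam n)) {ε : ℕ → E}
    (hε : Summable fun n => ‖ε n‖) {z : ℕ → E}
    (hz : ∀ n, z (n + 1) = z n + lam n • (T (z n) - z n) + ε n) :
    Tendsto (fun n => T (z n) - z n) atTop (𝓝 0) := by
  obtain ⟨R, hR, hTR⟩ := hT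
  obtain ⟨x, hx⟩ := hfix
  have hsub : ∀ y, T y - y = α • (R y - y) := fun y => by rw [hTR y]; module
  have hRx : R x = x := by
    have h := hsub x
    rw [hx, sub_self, eq_comm, smul_eq_zero] at h
    exact sub_eq_zero.1 (h.resolve_left hα.ne')
  have hμ : ∀ n, α * lam n ∈ Set.Icc (0 : ℝ) 1 := fun n =>
    ⟨mul_nonneg hα.le (hlam n).1, by have := (hlam n).2; rwa [le_div_iff₀' hα] at this⟩
  have hdiv' : ¬ Summable fun n => α * lam n * (1 - α * lam n) := fun h =>
    hdiv (by simpa [mul_assoc, hα.ne'] using h.mul_left α⁻¹)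
  have hres := hR.tendsto_apply_sub_self_of_relaxed hRx hμ hdiv' hε (z := z) fun n => by
    rw [hz n, hsub, smul_smul, mul_comm]
  simpa [hsub] using hres.const_smul α

end KrasnoselskiiMann

theorem statement2
    (m : ℕ) (hm : 1 ≤ m)
    (αi : ℕ → ℝ) (T : ℕ → H → H) (e : ℕ → ℕ → H)
    (hαi : ∀ i ∈ Finset.Icc 1 m, αi i ∈ Set.Ioo (0 : ℝ) 1)
    (hT : ∀ i ∈ Finset.Icc 1 m, IsAveragedOp (αi i) (T i))
    (M α : ℝ)
    (hM1 : ∀ i ∈ Finset.Icc 1 m, αi i ≤ M)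
    (hM2 : ∃ i ∈ Finset.Icc 1 m, αi i = M)
    (hα : α = (m : ℝ) * M / (1 + ((m : ℝ) - 1) * M))
    (lam : ℕ → ℝ) (hlam : ∀ n, lam n ∈ Set.Ioo (0 : ℝ) (1 / α))
    (hfix : ∃ x : H, compFrom T 1 m x = x)
    (hdiv : ¬ Summable (fun n => lam n * (1 - α * lam n)))
    (herr : ∀ i ∈ Finset.Icc 1 m, Summable (fun n => lam n * ‖e i n‖))
    (z : ℕ → H)
    (hz : ∀ n, z (n + 1) = z n + lam n • (inexactFrom T (fun i => e i n) 1 m (z n) - z n)) :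
    Tendsto (fun n => compFrom T 1 m (z n) - z n) atTop (nhds 0) := by
  obtain ⟨i₀, hi₀, hM⟩ := hM2
  have hM01 : M ∈ Set.Ioo (0 : ℝ) 1 := hM ▸ hαi i₀ hi₀
  set κ := M / (1 - M)
  have hκ : 0 < κ := div_pos hM01.1 (sub_pos.2 hM01.2)
  have hTκ : ∀ j, 1 ≤ j → j < 1 + m → AveragedIneq κ (T j) := fun j h₁ h₂ => by
    have hj := Finset.mem_Icc.2 ⟨h₁, (by omega : j ≤ m)⟩
    obtain ⟨hαj₀, hαj₁⟩ := hαi j hj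
    exact ((hT j hj).averagedIneq (hαi j hj)).mono (div_pos hαj₀ (sub_pos.2 hαj₁))
      (div_le_div₀ hM01.1.le (hM1 j hj) (sub_pos.2 hM01.2) (by linarith [hM1 j hj]))
  have hcomp : AveragedIneq (m * κ) (compFrom T 1 m) := AveragedIneq.compFrom hκ hm hTκ
  have hαeq : α = m * κ / (1 + m * κ) := by
    rw [hα]; simp only [κ]; field_simp [(sub_pos.2 hM01.2).ne']; ring
  have hα0 : 0 < α := hαeq ▸ by positivity
  have hε : Summable fun n =>
      ‖lam n • (inexactFrom T (fun i => e i n) 1 m (z n) - compFrom T 1 m (z n))‖ := by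
    refine Summable.of_nonneg_of_le (fun n => norm_nonneg _) (fun n => ?_) (summable_sum herr)
    rw [norm_smul, Real.norm_of_nonneg (hlam n).1.le, ← Finset.mul_sum,
      ← Finset.Ico_add_one_right_eq_Icc, add_comm m]
    exact mul_le_mul_of_nonneg_left (norm_inexactFrom_sub_compFrom_le T (fun i => e i n)
      (fun j h₁ h₂ => (hTκ j h₁ h₂).isNonexpansiveOp hκ) (z n)) (hlam n).1.le
  exact (hαeq ▸ hcomp.isAveragedOp (by positivity)).tendsto_apply_sub_self_of_relaxed hα0 hfix
    (fun n => Set.Ioo_subset_Icc_self (hlam n)) hdiv hε fun n => by rw [hz n]; module
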